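/- Let h: {1,...,n} → {1,...,n} be an indecomposable Hessenberg function (h(i) ≥ i+1 for all i < n, h nondecreasing, h(i) ≥ i), and let I_{w_0,h} = ⟨ f_{k,ℓ} : k > h(ℓ) ⟩ in K[x_{i,j} : i+j ≤ n], where f_{k,ℓ} = ((M')^{-1} N M')_{k,ℓ}. Then with respect to the lexicographic order with x_{i,j} > x_{i',j'} iff i < i' or (i = i' and j < j'), the set {f_{k,ℓ} : k > h(ℓ)} is a Gröbner basis of I_{w_0,h}, and in_<(I_{w_0,h}) = ⟨ x_{n+1−k, ℓ+1} : k > h(ℓ) ⟩ is an ideal generated by distinct indeterminates. -/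

import Mathlib

open MvPolynomial

/-- The generic antidiagonal-unipotent `n × n` matrix `M'` (the matrix `w₀M`):
indeterminates `x_{i,j}` above the antidiagonal, `1`'s on the antidiagonal,
`0`'s below. -/
noncomputable def genM (K : Type*) [Field K] (n : ℕ) :
    Matrix (Fin n) (Fin n) (MvPolynomial (Fin n × Fin n) K) := fun i j =>
  if (i : ℕ) + (j : ℕ) < n - 1 then MvPolynomial.X (i, j)
  else if (i : ℕ) + (j : ℕ) = n - 1 then 1 else 0

/-- The regular nilpotent Jordan matrix `N`, with `1`'s on the superdiagonal. -/
noncomputable def nilpMat (K : Type*) [Field K] (n : ℕ) :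
    Matrix (Fin n) (Fin n) (MvPolynomial (Fin n × Fin n) K) := fun i j =>
  if (j : ℕ) = (i : ℕ) + 1 then 1 else 0

/-- The matrix `(M')⁻¹ N M'`, whose `(k,ℓ)` entry is the polynomial `f_{k,ℓ}`. -/
noncomputable def hessMat (K : Type*) [Field K] (n : ℕ) :
    Matrix (Fin n) (Fin n) (MvPolynomial (Fin n × Fin n) K) :=
  (genM K n)⁻¹ * nilpMat K n * genM K n

/-- The rank of the variable `x_{i,j}`: variables are ordered by rows then columns,
a smaller rank meaning a more significant (larger) variable.  This realizes the
ordering `x_{i,j} > x_{i',j'}` iff `i < i'`, or `i = i'` and `j < j'`. -/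
def varRank (n : ℕ) (v : Fin n × Fin n) : ℕ := (v.1 : ℕ) * n + (v.2 : ℕ)

/-- The lexicographic order on monomials of `K[x_{i,j}]` induced by the variable
ordering above: `m ≤ m'` iff `m = m'` or at the most significant variable where
they differ, `m` has the smaller exponent. -/
def lexLE (n : ℕ) (m m' : (Fin n × Fin n) →₀ ℕ) : Prop :=
  m = m' ∨ ∃ v, m v < m' v ∧ ∀ w, varRank n w < varRank n v → m w = m' w

/-- `m` is the leading monomial of `f` with respect to `le`. -/
def IsLeadMono {K : Type*} [Field K] {n : ℕ}
    (le : ((Fin n × Fin n) →₀ ℕ) → ((Fin n × Fin n) →₀ ℕ) → Prop)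
    (f : MvPolynomial (Fin n × Fin n) K) (m : (Fin n × Fin n) →₀ ℕ) : Prop :=
  m ∈ f.support ∧ ∀ m' ∈ f.support, le m' m


/-- The initial ideal of `I`: the ideal generated by the leading terms of the
(nonzero) elements of `I`. -/
noncomputable def initialIdeal {K : Type*} [Field K] {n : ℕ}
    (le : ((Fin n × Fin n) →₀ ℕ) → ((Fin n × Fin n) →₀ ℕ) → Prop)
    (I : Ideal (MvPolynomial (Fin n × Fin n) K)) : Ideal (MvPolynomial (Fin n × Fin n) K) :=
  Ideal.span {t | ∃ g ∈ I, ∃ m, IsLeadMono le g m ∧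
    t = MvPolynomial.monomial m (MvPolynomial.coeff m g)}

/-!
From `M' F = N M'`, where `F = (M')⁻¹ N M'`, row `r` of `F` is expressed through the rows above
it. Inductively, `F` vanishes on and above the diagonal, has `1`'s on the subdiagonal, and for
`r ≥ l + 2` its entry `F r l` is `-x_{n-1-r, l+1}` plus a polynomial in variables that are
strictly smaller in the lexicographic order: each generator has a distinct indeterminate as
leading term.

Conversely, solving the generators for their leading variables by back substitution defines an
algebra map that kills `I`, fixes every monomial free of leading variables, and sends any
monomial to a combination of lexicographically smaller ones. So if the leading monomial of
`g ∈ I` contained no leading variable, its coefficient would survive in the image of `g`,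
which is `0`.
-/

section LexOrder

variable {n : ℕ}

lemma varRank_injective : Function.Injective (varRank n) := by
  rintro ⟨⟨a, ha⟩, ⟨b, hb⟩⟩ ⟨⟨c, hc⟩, ⟨d, hd⟩⟩ h
  simp only [varRank] at h
  obtain rfl : a = c := by
    rcases lt_trichotomy a c with h' | h' | h' <;> nlinarith
  obtain rfl : b = d := by omega
  rfl

lemma lexLE_antisymm {a b : (Fin n × Fin n) →₀ ℕ} (hab : lexLE n a b) (hba : lexLE n b a) :
    a = b := by
  rcases hab with rfl | ⟨v, hv, hlt⟩
  · rfl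
  rcases hba with rfl | ⟨w, hw, hlt'⟩
  · rfl
  exfalso
  rcases lt_trichotomy (varRank n v) (varRank n w) with h' | h' | h'
  · rw [hlt' v h'] at hv; omega
  · rw [varRank_injective h'] at hv; omega
  · rw [hlt w h'] at hw; omega

lemma lexLE_trans {a b c : (Fin n × Fin n) →₀ ℕ} (hab : lexLE n a b) (hbc : lexLE n b c) :
    lexLE n a c := by
  rcases hab with rfl | ⟨v, hv, hlt⟩
  · exact hbc
  rcases hbc with rfl | ⟨w, hw, hlt'⟩
  · exact Or.inr ⟨v, hv, hlt⟩
  rcases lt_trichotomy (varRank n v) (varRank n w) with h' | h' | h'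
  · exact Or.inr ⟨v, hlt' v h' ▸ hv, fun u hu => (hlt u hu).trans (hlt' u (hu.trans h'))⟩
  · rw [varRank_injective h'] at hv hlt
    exact Or.inr ⟨w, hv.trans hw, fun u hu => (hlt u hu).trans (hlt' u hu)⟩
  · exact Or.inr ⟨w, (hlt w h').symm ▸ hw, fun u hu => (hlt u (hu.trans h')).trans (hlt' u hu)⟩

lemma lexLE_add_right {a b : (Fin n × Fin n) →₀ ℕ} (hab : lexLE n a b) (c : (Fin n × Fin n) →₀ ℕ) :
    lexLE n (a + c) (b + c) := by
  rcases hab with rfl | ⟨v, hv, hlt⟩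
  · exact Or.inl rfl
  · exact Or.inr ⟨v, by simpa using hv, fun u hu => by simp [hlt u hu]⟩

lemma lexLE_add {a b c d : (Fin n × Fin n) →₀ ℕ} (hab : lexLE n a b) (hcd : lexLE n c d) :
    lexLE n (a + c) (b + d) :=
  lexLE_trans (lexLE_add_right hab c) (by simpa only [add_comm b] using lexLE_add_right hcd b)

lemma varRank_lt_of_fst_lt {v w : Fin n × Fin n} (h : v.1 < w.1) : varRank n v < varRank n w := by
  have := v.2.isLt
  have : (v.1 : ℕ) * n + n ≤ w.1 * n := by
    rw [← Nat.succ_mul]; exact Nat.mul_le_mul_right n h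
  simp only [varRank]; omega

lemma varRank_lt_of_snd_lt {v w : Fin n × Fin n} (h₁ : v.1 = w.1) (h₂ : v.2 < w.2) :
    varRank n v < varRank n w := by
  simp only [varRank, h₁]; exact Nat.add_lt_add_left h₂ _

lemma varRank_lt_mul_self (v : Fin n × Fin n) : varRank n v < n * n := by
  have := v.2.isLt
  have : ((v.1 : ℕ) + 1) * n ≤ n * n := Nat.mul_le_mul_right n v.1.isLt
  simp only [varRank]; linarith [add_mul (v.1 : ℕ) 1 n]

def smallerVars (n : ℕ) (v : Fin n × Fin n) : Set (Fin n × Fin n) :=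
  {w | varRank n v < varRank n w}

lemma lexLE_single_of_support_subset {μ : (Fin n × Fin n) →₀ ℕ} {v : Fin n × Fin n} {k : ℕ}
    (hμ : ↑μ.support ⊆ smallerVars n v) (hk : k ≠ 0) : lexLE n μ (Finsupp.single v k) := by
  have hzero : ∀ w, varRank n w ≤ varRank n v → μ w = 0 := fun w hw =>
    Finsupp.notMem_support_iff.mp fun hw' => (hμ hw').not_ge hw
  refine Or.inr ⟨v, ?_, fun w hw => ?_⟩
  · rw [hzero v le_rfl, Finsupp.single_eq_same]; omega
  · rw [hzero w hw.le, Finsupp.single_eq_of_ne (by rintro rfl; exact hw.false)]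

lemma lexLE_of_mem_support_prod {R ι : Type*} [CommSemiring R] [Nontrivial R] (s : Finset ι)
    (p : ι → MvPolynomial (Fin n × Fin n) R) (m : ι → (Fin n × Fin n) →₀ ℕ)
    (h : ∀ i ∈ s, ∀ μ ∈ (p i).support, lexLE n μ (m i)) :
    ∀ μ ∈ (∏ i ∈ s, p i).support, lexLE n μ (∑ i ∈ s, m i) := by
  classical
  induction s using Finset.induction_on with
  | empty =>
    intro μ hμ
    rw [Finset.prod_empty, support_one, Finset.mem_singleton] at hμ
    exact Or.inl hμ
  | insert i s hi ih =>
    intro μ hμ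
    rw [Finset.prod_insert hi] at hμ
    obtain ⟨μ₁, hμ₁, μ₂, hμ₂, rfl⟩ := Finset.mem_add.mp (support_mul _ _ hμ)
    rw [Finset.sum_insert hi]
    exact lexLE_add (h i (Finset.mem_insert_self i s) μ₁ hμ₁)
      (ih (fun j hj => h j (Finset.mem_insert_of_mem hj)) μ₂ hμ₂)

end LexOrder

section Support

variable {σ K : Type*} [CommSemiring K]

lemma MvPolynomial.support_subset_of_mem_supported {p : MvPolynomial σ K} {s : Set σ}
    (hp : p ∈ supported K s) {μ : σ →₀ ℕ} (hμ : μ ∈ p.support) : ↑μ.support ⊆ s :=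
  fun i hi => mem_supported.mp hp ((mem_vars_iff_mem_support i).mpr ⟨μ, hμ, hi⟩)

lemma MvPolynomial.aeval_mem_of_mem_supported {A : Type*} [CommSemiring A] [Algebra K A]
    {T : Subalgebra K A} {g : σ → A} {p : MvPolynomial σ K} {s : Set σ}
    (hp : p ∈ supported K s) (hg : ∀ i ∈ s, g i ∈ T) : aeval g p ∈ T := by
  rw [supported_eq_range_rename, AlgHom.mem_range] at hp
  obtain ⟨q, rfl⟩ := hp
  rw [aeval_rename]
  exact eval₂_mem (fun _ _ => T.algebraMap_mem _) fun i => hg i i.2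

lemma MvPolynomial.aeval_congr_of_mem_supported {A : Type*} [CommSemiring A] [Algebra K A]
    {g₁ g₂ : σ → A} {p : MvPolynomial σ K} {s : Set σ}
    (hp : p ∈ supported K s) (hg : ∀ i ∈ s, g₁ i = g₂ i) : aeval g₁ p = aeval g₂ p := by
  rw [supported_eq_range_rename, AlgHom.mem_range] at hp
  obtain ⟨q, rfl⟩ := hp
  rw [aeval_rename, aeval_rename, show g₁ ∘ Subtype.val = g₂ ∘ Subtype.val from
    _root_.funext fun i : s => hg i i.2]

end Support

section LeadingTerms

variable {K : Type*} [Field K] {n : ℕ}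

lemma isLeadMono_of_add_X_mem_supported {p : MvPolynomial (Fin n × Fin n) K} {v : Fin n × Fin n}
    (hp : p + X v ∈ supported K (smallerVars n v)) :
    IsLeadMono (lexLE n) p (Finsupp.single v 1) ∧ coeff (Finsupp.single v 1) p = -1 := by
  have hsupp : ∀ μ ∈ (p + X v).support, ↑μ.support ⊆ smallerVars n v := fun μ hμ =>
    support_subset_of_mem_supported hp hμ
  have hcoeff : coeff (Finsupp.single v 1) p = -1 := by
    have : coeff (Finsupp.single v 1) (p + X v) = 0 := by
      by_contra h
      exact lt_irrefl (varRank n v)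
        (hsupp _ (mem_support_iff.mpr h) (by simp : v ∈ (Finsupp.single v 1).support))
    rw [coeff_add, coeff_X, if_pos rfl] at this
    exact eq_neg_of_add_eq_zero_left this
  refine ⟨⟨mem_support_iff.mpr (by simp [hcoeff]), fun μ hμ => ?_⟩, hcoeff⟩
  by_cases hμv : μ = Finsupp.single v 1
  · exact Or.inl hμv
  refine lexLE_single_of_support_subset (hsupp μ (mem_support_iff.mpr ?_)) one_ne_zero
  rwa [coeff_add, coeff_X, if_neg (Ne.symm hμv), add_zero, ← mem_support_iff]

lemma exists_leadTerm_eq_iff_of_add_X_mem_supported {p : MvPolynomial (Fin n × Fin n) K}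
    {v : Fin n × Fin n} (hp : p + X v ∈ supported K (smallerVars n v))
    (t : MvPolynomial (Fin n × Fin n) K) :
    (∃ m, IsLeadMono (lexLE n) p m ∧ t = monomial m (coeff m p)) ↔ t = -X v := by
  obtain ⟨hlead, hcoeff⟩ := isLeadMono_of_add_X_mem_supported hp
  have hX : monomial (Finsupp.single v 1) (coeff (Finsupp.single v 1) p) = -X v := by
    rw [hcoeff, X, ← map_neg]
  constructor
  · rintro ⟨m, hm, rfl⟩
    obtain rfl : m = Finsupp.single v 1 := lexLE_antisymm (hlead.2 m hm.1) (hm.2 _ hlead.1)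
    exact hX
  · rintro rfl
    exact ⟨_, hlead, hX.symm⟩

end LeadingTerms

section TriangularSubstitution

variable {K : Type*} [Field K] {n : ℕ}

open Classical in
/-- Back substitution solving `f v = 0`, `v ∈ S`, for `x_v`: when `f v + x_v` involves only
variables smaller than `x_v`, the variable `x_v` is sent to the image of `f v + x_v`, computed
recursively from the smallest variables upwards. -/
noncomputable def triangularSubst (S : Set (Fin n × Fin n))
    (f : Fin n × Fin n → MvPolynomial (Fin n × Fin n) K) (v : Fin n × Fin n) :
    MvPolynomial (Fin n × Fin n) K :=
  if v ∈ S then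
    aeval (fun w => if _ : varRank n v < varRank n w then triangularSubst S f w else X w)
      (f v + X v)
  else X v
termination_by n * n - varRank n v
decreasing_by have := varRank_lt_mul_self w; omega

variable {S : Set (Fin n × Fin n)} {f : Fin n × Fin n → MvPolynomial (Fin n × Fin n) K}

lemma triangularSubst_of_notMem {v : Fin n × Fin n} (hv : v ∉ S) :
    triangularSubst S f v = X v := by
  rw [triangularSubst, if_neg hv]

lemma aeval_triangularSubst_monomial {m : (Fin n × Fin n) →₀ ℕ} (hm : ∀ u ∈ m.support, u ∉ S)
    (c : K) : aeval (triangularSubst S f) (monomial m c) = monomial m c := by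
  rw [aeval_monomial, algebraMap_eq, Finsupp.prod,
    Finset.prod_congr rfl fun u hu => by rw [triangularSubst_of_notMem (hm u hu)],
    monomial_eq, Finsupp.prod]

section

variable (hf : ∀ v ∈ S, f v + X v ∈ supported K (smallerVars n v))
include hf

lemma triangularSubst_of_mem {v : Fin n × Fin n} (hv : v ∈ S) :
    triangularSubst S f v = aeval (triangularSubst S f) (f v + X v) := by
  rw [triangularSubst, if_pos hv]
  exact aeval_congr_of_mem_supported (hf v hv) fun w hw => dif_pos hw

lemma triangularSubst_mem_supported (v : Fin n × Fin n) :
    triangularSubst S f v ∈ supported K ({w | varRank n v ≤ varRank n w} \ S) := by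
  by_cases hv : v ∈ S
  · rw [triangularSubst_of_mem hf hv]
    refine aeval_mem_of_mem_supported (hf v hv) fun w hw => ?_
    have hvw : varRank n v < varRank n w := hw
    exact supported_mono (Set.sdiff_subset_sdiff_left fun u (hu : varRank n w ≤ varRank n u) =>
      hvw.le.trans hu) (triangularSubst_mem_supported w)
  · rw [triangularSubst_of_notMem hv]
    exact X_mem_supported.mpr ⟨show varRank n v ≤ varRank n v from le_rfl, hv⟩
termination_by n * n - varRank n v
decreasing_by have := varRank_lt_mul_self w; omega

lemma lexLE_of_mem_support_aeval_triangularSubst_monomial {m μ : (Fin n × Fin n) →₀ ℕ} {c : K}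
    (hμ : μ ∈ (aeval (triangularSubst S f) (monomial m c)).support) : lexLE n μ m := by
  rw [aeval_monomial, algebraMap_eq, ← smul_eq_C_mul] at hμ
  have key := lexLE_of_mem_support_prod m.support _ (fun u => Finsupp.single u (m u))
    (fun u hu ν hν => ?_) μ (support_smul hμ)
  · rwa [← Finsupp.sum, Finsupp.sum_single] at key
  by_cases huS : u ∈ S
  · refine lexLE_single_of_support_subset (support_subset_of_mem_supported ?_ hν)
      (Finsupp.mem_support_iff.mp hu)
    refine pow_mem (supported_mono (fun w hw => ?_) (triangularSubst_mem_supported hf u)) _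
    show varRank n u < varRank n w
    exact lt_of_le_of_ne hw.1 fun h => hw.2 (varRank_injective h ▸ huS)
  · dsimp only at hν
    rw [triangularSubst_of_notMem huS, support_X_pow, Finset.mem_singleton] at hν
    exact Or.inl hν

lemma aeval_triangularSubst_eq_zero {g : MvPolynomial (Fin n × Fin n) K}
    (hg : g ∈ Ideal.span (f '' S)) : aeval (triangularSubst S f) g = 0 := by
  refine (Ideal.span_le (I := RingHom.ker (aeval (triangularSubst S f)))).mpr ?_ hg
  rintro _ ⟨v, hv, rfl⟩
  rw [SetLike.mem_coe, RingHom.mem_ker, ← add_sub_cancel_right (f v) (X v), map_sub, aeval_X,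
    ← triangularSubst_of_mem hf hv, sub_self]

lemma exists_mem_ne_zero_of_isLeadMono {g : MvPolynomial (Fin n × Fin n) K}
    (hg : g ∈ Ideal.span (f '' S)) {m : (Fin n × Fin n) →₀ ℕ} (hm : IsLeadMono (lexLE n) g m) :
    ∃ v ∈ S, m v ≠ 0 := by
  by_contra! hfree
  have hcoeff : coeff m (aeval (triangularSubst S f) g) = coeff m g := by
    conv_lhs => rw [g.as_sum]
    rw [map_sum, coeff_sum, Finset.sum_eq_single m (fun m' hm' hne => ?_) (absurd hm.1),
      aeval_triangularSubst_monomial (fun u hu hu' => Finsupp.mem_support_iff.mp hu (hfree u hu')),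
      coeff_monomial, if_pos rfl]
    by_contra h
    exact hne (lexLE_antisymm (hm.2 m' hm')
      (lexLE_of_mem_support_aeval_triangularSubst_monomial hf (mem_support_iff.mpr h)))
  rw [aeval_triangularSubst_eq_zero hf hg, coeff_zero] at hcoeff
  exact mem_support_iff.mp hm.1 hcoeff.symm

end

end TriangularSubstitution

section HessenbergEntries

variable {K : Type*} [Field K] {n : ℕ}

lemma genM_rev_apply (r p : Fin n) :
    genM K n r.rev p = if p < r then X (r.rev, p) else if p = r then 1 else 0 := by
  have := r.isLt
  simp only [genM, Fin.val_rev, Fin.lt_def, Fin.ext_iff]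
  split_ifs <;> first | rfl | omega

lemma isUnit_det_genM : IsUnit (genM K n).det := by
  set L := (genM K n).submatrix Fin.rev id
  have hL : L.det = 1 := by
    rw [Matrix.det_of_isLowerTriangular L fun i j hij => ?_]
    · exact Finset.prod_eq_one fun i _ => by simp [L, genM_rev_apply]
    · have hij : i < j := hij
      simp [L, genM_rev_apply, hij.not_gt, hij.ne']
  have hgen : genM K n = L.submatrix Fin.revPerm id := by
    ext i j; simp [L]
  rw [hgen, Matrix.det_permute, hL, mul_one]
  rcases Int.units_eq_one_or (Equiv.Perm.sign (Fin.revPerm : Equiv.Perm (Fin n))) with h | h <;>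
    simp [h]

lemma genM_mul_hessMat : genM K n * hessMat K n = nilpMat K n * genM K n := by
  rw [hessMat, ← Matrix.mul_assoc, ← Matrix.mul_assoc,
    Matrix.mul_nonsing_inv _ isUnit_det_genM, Matrix.one_mul]

lemma nilpMat_mul_apply (A : Matrix (Fin n) (Fin n) (MvPolynomial (Fin n × Fin n) K))
    (i j : Fin n) :
    (nilpMat K n * A) i j = if h : (i : ℕ) + 1 < n then A ⟨i + 1, h⟩ j else 0 := by
  rw [Matrix.mul_apply]
  split_ifs with h
  · rw [Finset.sum_eq_single ⟨i + 1, h⟩ (fun p _ hp => by simp [nilpMat, Fin.ext_iff.not.mp hp])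
      (by simp)]
    simp [nilpMat]
  · exact Finset.sum_eq_zero fun p _ => by simp [nilpMat]; omega

lemma hessMat_eq (r l : Fin n) :
    hessMat K n r l =
      (nilpMat K n * genM K n) r.rev l - ∑ p ∈ Finset.Iio r, X (r.rev, p) * hessMat K n p l := by
  have key := congr_fun₂ (genM_mul_hessMat (K := K) (n := n)) r.rev l
  simp only [Matrix.mul_apply, genM_rev_apply, ite_mul, one_mul, zero_mul] at key
  rw [Finset.sum_ite, Finset.sum_ite_eq', if_pos (by simp), Finset.filter_gt_eq_Iio] at key
  rw [Matrix.mul_apply, ← key]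
  ring

lemma hessMat_eq_zero_of_le {r l : Fin n} (hrl : r ≤ l) : hessMat K n r l = 0 := by
  rw [hessMat_eq, Finset.sum_eq_zero fun p hp => by
    rw [hessMat_eq_zero_of_le ((Finset.mem_Iio.mp hp).le.trans hrl), mul_zero]]
  have : (r : ℕ) ≤ l := hrl
  have := l.isLt
  simp only [nilpMat_mul_apply, genM, Fin.val_rev, sub_zero]
  split_ifs <;> first | rfl | omega
termination_by r
decreasing_by exact (Finset.mem_Iio.mp hp : p < r)

lemma hessMat_eq_one {r l : Fin n} (hrl : (r : ℕ) = l + 1) : hessMat K n r l = 1 := by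
  rw [hessMat_eq, Finset.sum_eq_zero fun p hp => by
    rw [hessMat_eq_zero_of_le (Fin.le_def.mpr (by have := Finset.mem_Iio.mp hp; omega)), mul_zero]]
  have := r.isLt
  simp only [nilpMat_mul_apply, genM, Fin.val_rev, sub_zero]
  split_ifs <;> first | rfl | omega

lemma nilpMat_mul_genM_mem_supported (i j : Fin n) :
    (nilpMat K n * genM K n) i j ∈ supported K {w | i < w.1} := by
  rw [nilpMat_mul_apply]
  split_ifs with h
  · simp only [genM]
    split_ifs
    · exact X_mem_supported.mpr (Fin.lt_def.mpr (Nat.lt_succ_self _))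
    · exact one_mem _
    · exact zero_mem _
  · exact zero_mem _

lemma hessMat_mem_supported (r l : Fin n) : hessMat K n r l ∈ supported K {w | r.rev ≤ w.1} := by
  rw [hessMat_eq]
  have hrow : {w : Fin n × Fin n | r.rev < w.1} ⊆ {w | r.rev ≤ w.1} := fun _ hw =>
    le_of_lt (α := Fin n) hw
  refine sub_mem (supported_mono hrow (nilpMat_mul_genM_mem_supported _ _))
    (sum_mem fun p hp => mul_mem (X_mem_supported.mpr (show r.rev ≤ r.rev from le_rfl))
      (supported_mono (fun w hw => ?_) (hessMat_mem_supported p l)))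
  exact (Fin.rev_lt_rev.mpr (Finset.mem_Iio.mp hp)).le.trans hw
termination_by r
decreasing_by exact (Finset.mem_Iio.mp hp : p < r)

lemma hessMat_add_X_mem_supported {r l b : Fin n} (hb : (b : ℕ) = l + 1) (hbr : b < r) :
    hessMat K n r l + X (r.rev, b) ∈ supported K (smallerVars n (r.rev, b)) := by
  have hsplit : hessMat K n r l + X (r.rev, b) = (nilpMat K n * genM K n) r.rev l -
      ∑ p ∈ (Finset.Iio r).erase b, X (r.rev, p) * hessMat K n p l := by
    rw [hessMat_eq, ← Finset.add_sum_erase _ _ (Finset.mem_Iio.mpr hbr), hessMat_eq_one hb, mul_one]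
    ring
  rw [hsplit]
  refine sub_mem (supported_mono (fun w hw => varRank_lt_of_fst_lt hw)
    (nilpMat_mul_genM_mem_supported _ _)) (sum_mem fun p hp => ?_)
  obtain ⟨hpb, hpr⟩ := Finset.mem_erase.mp hp
  rcases le_or_gt p l with hpl | hlp
  · rw [hessMat_eq_zero_of_le hpl, mul_zero]
    exact zero_mem _
  have hbp : b < p := Fin.lt_def.mpr (by have := Fin.val_ne_of_ne hpb; omega)
  refine mul_mem (X_mem_supported.mpr (varRank_lt_of_snd_lt rfl hbp))
    (supported_mono (fun w hw => varRank_lt_of_fst_lt ?_) (hessMat_mem_supported p l))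
  exact (Fin.rev_lt_rev.mpr (Finset.mem_Iio.mp hpr)).trans_le hw

end HessenbergEntries

section HessenbergIdeal

variable {K : Type*} [Field K] {n : ℕ} {h : ℕ → ℕ}

/-- The variables `x_{n-k, ℓ}` with `k > h ℓ`; 0-indexed, `v = (n - k, ℓ)` corresponds to the
1-indexed `x_{n+1-k, ℓ+1}` of the paper. -/
def hessLeadVars (n : ℕ) (h : ℕ → ℕ) : Set (Fin n × Fin n) :=
  {v | 1 ≤ (v.2 : ℕ) ∧ h v.2 < n - v.1}

/-- The generator `f_{k,ℓ}` whose leading variable is `x_v`, `v = (n - k, ℓ)`: it is the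
0-indexed entry `(k - 1, ℓ - 1)` of `hessMat`. -/
noncomputable def hessGen (K : Type*) [Field K] (n : ℕ) (v : Fin n × Fin n) :
    MvPolynomial (Fin n × Fin n) K :=
  hessMat K n v.1.rev ⟨v.2 - 1, by omega⟩

lemma hessGen_add_X_mem_supported (hindec : ∀ i, 1 ≤ i → i < n → i + 1 ≤ h i)
    {v : Fin n × Fin n} (hv : v ∈ hessLeadVars n h) :
    hessGen K n v + X v ∈ supported K (smallerVars n v) := by
  obtain ⟨hv1, hv2⟩ : 1 ≤ (v.2 : ℕ) ∧ h v.2 < n - v.1 := hv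
  have := hindec v.2 hv1 v.2.isLt
  have key := hessMat_add_X_mem_supported (K := K) (r := v.1.rev) (l := ⟨v.2 - 1, by omega⟩)
    (b := v.2) (by simp only; omega) (Fin.lt_def.mpr (by rw [Fin.val_rev]; omega))
  rwa [Fin.rev_rev] at key

theorem initialIdeal_span_hessGen (hindec : ∀ i, 1 ≤ i → i < n → i + 1 ≤ h i) :
    initialIdeal (lexLE n) (Ideal.span (hessGen K n '' hessLeadVars n h)) =
      Ideal.span (X '' hessLeadVars n h) := by
  have hf := fun v (hv : v ∈ hessLeadVars n h) => hessGen_add_X_mem_supported (K := K) hindec hv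
  apply le_antisymm
  · refine Ideal.span_le.mpr ?_
    rintro _ ⟨g, hg, m, hm, rfl⟩
    obtain ⟨v, hv, hmv⟩ := exists_mem_ne_zero_of_isLeadMono hf hg hm
    have hdvd : monomial m (coeff m g) = monomial (m - Finsupp.single v 1) (coeff m g) * X v := by
      rw [X, monomial_mul, mul_one,
        tsub_add_cancel_of_le (Finsupp.single_le_iff.mpr (Nat.one_le_iff_ne_zero.mpr hmv))]
    rw [SetLike.mem_coe, hdvd]
    exact Ideal.mul_mem_left _ _ (Ideal.subset_span ⟨v, hv, rfl⟩)
  · refine Ideal.span_le.mpr ?_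
    rintro _ ⟨v, hv, rfl⟩
    rw [SetLike.mem_coe, ← neg_neg (X v)]
    exact neg_mem (Ideal.subset_span ⟨_, Ideal.subset_span ⟨v, hv, rfl⟩,
      (exists_leadTerm_eq_iff_of_add_X_mem_supported (hf v hv) _).mpr rfl⟩)

section Reindexing

variable (hh : ∀ i, 1 ≤ i → i ≤ n → i ≤ h i)
include hh

lemma exists_hessLeadVars_iff (P : Fin n × Fin n → Prop) :
    (∃ k l : ℕ, ∃ (hl1 : 1 ≤ l) (hln : l ≤ n) (hkn : k ≤ n) (hhk : h l < k),
      P (⟨n - k, Nat.sub_lt (hl1.trans hln) ((Nat.zero_le _).trans_lt hhk)⟩,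
        ⟨l, (hh l hl1 hln).trans_lt (hhk.trans_le hkn)⟩)) ↔
    ∃ v ∈ hessLeadVars n h, P v := by
  constructor
  · rintro ⟨k, l, hl1, hln, hkn, hhk, hP⟩
    exact ⟨_, ⟨hl1, by simp only; omega⟩, hP⟩
  · rintro ⟨⟨a, b⟩, ⟨hb1, hab⟩, hP⟩
    refine ⟨n - a, b, hb1, b.isLt.le, Nat.sub_le _ _, hab, ?_⟩
    convert hP using 2
    exact Fin.ext (by simp only; omega)

lemma exists_hessMat_iff (P : MvPolynomial (Fin n × Fin n) K → Prop) :
    (∃ k l : ℕ, ∃ (hl1 : 1 ≤ l) (hln : l ≤ n) (hkn : k ≤ n) (hhk : h l < k),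
      P (hessMat K n ⟨k - 1, Nat.sub_one_lt_of_le ((Nat.zero_le _).trans_lt hhk) hkn⟩
        ⟨l - 1, Nat.sub_one_lt_of_le hl1 hln⟩)) ↔
    ∃ v ∈ hessLeadVars n h, P (hessGen K n v) := by
  refine Iff.trans ?_ (exists_hessLeadVars_iff hh (P ∘ hessGen K n))
  refine exists_congr fun k => exists_congr fun l => exists_congr fun hl1 => exists_congr
    fun hln => exists_congr fun hkn => exists_congr fun hhk => ?_
  have hrev : (⟨k - 1, by omega⟩ : Fin n) = Fin.rev ⟨n - k, by omega⟩ :=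
    Fin.ext (by rw [Fin.val_rev]; simp only; omega)
  rw [hrev]
  rfl

end Reindexing

end HessenbergIdeal

/-- Let `h` be an indecomposable Hessenberg function on `{1,…,n}`
(1-indexed: `i ≤ h i ≤ n`, nondecreasing, `i + 1 ≤ h i` for `i < n`), and let
`I = ⟨ f_{k,ℓ} : k > h(ℓ) ⟩`.  Then with respect to the lexicographic order `lexLE n`
the generators `f_{k,ℓ}`, `k > h(ℓ)`, form a Gröbner basis of `I` (their leading
terms generate the initial ideal of `I`), and `in_<(I)` is generated by the
indeterminates `x_{n+1-k, ℓ+1}` (0-indexed `(n-k, ℓ)`) for `k > h(ℓ)`, which are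
pairwise distinct. -/
theorem stmt9 {K : Type*} [Field K] {n : ℕ}
    (h : ℕ → ℕ)
    (hh : ∀ i, 1 ≤ i → i ≤ n → i ≤ h i ∧ h i ≤ n)
    (hindec : ∀ i, 1 ≤ i → i < n → i + 1 ≤ h i)
    (I : Ideal (MvPolynomial (Fin n × Fin n) K))
    (hI : I = Ideal.span {g | ∃ k l : ℕ, ∃ (hl1 : 1 ≤ l) (hln : l ≤ n)
      (hkn : k ≤ n) (hhk : h l < k),
      g = hessMat K n ⟨k - 1, by have := hh l hl1 hln; omega⟩
        ⟨l - 1, by omega⟩}) :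
    initialIdeal (lexLE n) I =
      Ideal.span {t | ∃ k l : ℕ, ∃ (hl1 : 1 ≤ l) (hln : l ≤ n)
        (hkn : k ≤ n) (hhk : h l < k), ∃ m,
        IsLeadMono (lexLE n)
          (hessMat K n ⟨k - 1, by have := hh l hl1 hln; omega⟩ ⟨l - 1, by omega⟩) m ∧
        t = MvPolynomial.monomial m (MvPolynomial.coeff m
          (hessMat K n ⟨k - 1, by have := hh l hl1 hln; omega⟩ ⟨l - 1, by omega⟩))} ∧
    initialIdeal (lexLE n) I =
      Ideal.span {t | ∃ k l : ℕ, ∃ (hl1 : 1 ≤ l) (hln : l ≤ n)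
        (hkn : k ≤ n) (hhk : h l < k),
        t = MvPolynomial.X ((⟨n - k, by have := hh l hl1 hln; omega⟩ : Fin n),
          (⟨l, by have := hh l hl1 hln; omega⟩ : Fin n))} ∧
    (∀ k l k' l' : ℕ, 1 ≤ l → l ≤ n → k ≤ n → h l < k →
      1 ≤ l' → l' ≤ n → k' ≤ n → h l' < k' →
      ((n - k : ℕ), l) = ((n - k' : ℕ), l') → k = k' ∧ l = l') := by
  have hle i hi hin : i ≤ h i := (hh i hi hin).1
  have hinit : initialIdeal (lexLE n) I = Ideal.span (X '' hessLeadVars n h) := by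
    rw [hI, ← initialIdeal_span_hessGen hindec]
    congr 2
    ext g
    exact (exists_hessMat_iff hle (g = ·)).trans (by simp [eq_comm])
  refine ⟨?_, ?_, ?_⟩
  · rw [hinit, Ideal.span, ← Submodule.span_neg]
    congr 1
    ext t
    refine Iff.trans ?_ (exists_hessMat_iff hle fun g =>
      ∃ m, IsLeadMono (lexLE n) g m ∧ t = monomial m (coeff m g)).symm
    simp only [Set.mem_neg, Set.mem_image]
    refine exists_congr fun v => and_congr_right fun hv => ?_
    rw [eq_comm, neg_eq_iff_eq_neg,
      exists_leadTerm_eq_iff_of_add_X_mem_supported (hessGen_add_X_mem_supported hindec hv)]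
  · rw [hinit]
    congr 1
    ext t
    refine Iff.trans ?_ (exists_hessLeadVars_iff hle (t = X ·)).symm
    simp [eq_comm]
  · intro k l k' l' hl1 hln hkn hhk hl1' hln' hkn' hhk' heq
    have := hh l hl1 hln
    have := hh l' hl1' hln'
    simp only [Prod.mk.injEq] at heq
    omega
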